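/- arXiv:1707.09746 — 4 statements merged into one kernel-verified Lean document; each statement's English description precedes it below -/
import Mathlib

section
/- Let G be a finite p-group in which every conjugacy class has size 1 or pⁿ (and some class has size pⁿ, n ≥ 1), and suppose Z(G) = [G,G]. Then both G/Z(G) and [G,G] are elementary abelian p-groups. -/
/-- The conjugacy class of `x` in a group. -/
def conjClass {G : Type*} [Group G] (x : G) : Set G := {y | ∃ g : G, g⁻¹ * x * g = y}

/-- `G` is of conjugate type `{1, m}`: every conjugacy class has size `1` or `m`,
and some class has size `m`. -/
def IsConjugateType (G : Type*) [Group G] (m : ℕ) : Prop :=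
  (∀ x : G, Nat.card (conjClass x) = 1 ∨ Nat.card (conjClass x) = m) ∧
  (∃ x : G, Nat.card (conjClass x) = m)

/-- `G` is a Camina group: the class of every `x ∉ G'` is the coset `xG'`. -/
def IsCamina (G : Type*) [Group G] : Prop :=
  ∀ x : G, x ∉ commutator G → conjClass x = (fun c => x * c) '' (commutator G : Set G)

open scoped commutatorElement

/-- Two groups are isoclinic. -/
def Isoclinic (G H : Type*) [Group G] [Group H] : Prop :=
  ∃ (φ : (G ⧸ Subgroup.center G) ≃* (H ⧸ Subgroup.center H))
    (θ : (commutator G) ≃* (commutator H)),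
    ∀ (x y : G) (x' y' : H),
      φ (QuotientGroup.mk x) = QuotientGroup.mk x' →
      φ (QuotientGroup.mk y) = QuotientGroup.mk y' →
      (θ ⟨⁅x, y⁆, Subgroup.commutator_mem_commutator (Subgroup.mem_top x) (Subgroup.mem_top y)⟩ : H) = ⁅x', y'⁆

/-!
Since `[G,G] = Z(G)`, commutators are central, so `g ↦ ⁅g, x⁆` is a homomorphism whose image `H_x`
translates to the conjugacy class `H_x x` of `x`; in particular `|H_x| = pⁿ` whenever `x` is not
central, and `H_{xᵖ}` is the image of `H_x` under `s ↦ sᵖ`. If `xᵖ` were not central, `H_x` and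
`H_{xᵖ}` would both have order `pⁿ`, so `s ↦ sᵖ` would be injective on `H_x`, contradicting
Cauchy's theorem. Hence `G/Z(G)` has exponent `p`, and so does `[G,G]`, being generated by the
central elements `⁅u, v⁆` with `⁅u, v⁆ᵖ = ⁅uᵖ, v⁆ = 1`.
-/

open Subgroup

section

variable {G : Type*} [Group G]

theorem conjClass_eq_image_range_commutatorElement (x : G) :
    conjClass x = (· * x) '' Set.range fun g : G => ⁅g, x⁆ := by
  ext y
  constructor
  · rintro ⟨g, rfl⟩
    exact ⟨⁅g⁻¹, x⁆, ⟨g⁻¹, rfl⟩, by group⟩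
  · rintro ⟨_, ⟨g, rfl⟩, rfl⟩
    exact ⟨g⁻¹, by group⟩

theorem card_conjClass_eq_card_range_commutatorElement (x : G) :
    Nat.card (conjClass x) = Nat.card (Set.range fun g : G => ⁅g, x⁆) := by
  rw [conjClass_eq_image_range_commutatorElement, Nat.card_image_of_injective (mul_left_injective x)]

theorem mem_center_of_card_conjClass_eq_one {x : G} (hx : Nat.card (conjClass x) = 1) :
    x ∈ center G := by
  have : Subsingleton (conjClass x) := (Nat.card_eq_one_iff_unique.mp hx).1
  refine mem_center_iff.mpr fun g => ?_
  have hconj : g⁻¹ * x * g = x :=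
    congrArg Subtype.val (Subsingleton.elim (⟨_, g, rfl⟩ : conjClass x) ⟨x, 1, by group⟩)
  calc g * x = g * (g⁻¹ * x * g) := by rw [hconj]
    _ = x * g := by group

theorem not_injOn_pow_of_prime_dvd_card {p : ℕ} (hp : p.Prime) (H : Subgroup G) [Finite H]
    (hdvd : p ∣ Nat.card H) : ¬ Set.InjOn (· ^ p) (H : Set G) := by
  have : Fact p.Prime := ⟨hp⟩
  obtain ⟨z, hz⟩ := exists_prime_orderOf_dvd_card' p hdvd
  have hz1 : z ≠ 1 := fun h => hp.one_lt.ne' (by rw [← hz, h, orderOf_one])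
  have hzp : z ^ p = 1 := hz ▸ pow_orderOf_eq_one z
  intro hinj
  refine hz1 (Subtype.ext (hinj z.2 (one_mem H) ?_))
  simpa using congrArg Subtype.val hzp

end

section CentralCommutators

variable {G : Type*} [Group G]

theorem commutatorElement_mem_center (h : commutator G ≤ center G) (a b : G) :
    ⁅a, b⁆ ∈ center G :=
  h (commutator_mem_commutator (mem_top a) (mem_top b))

def commutatorLeftHom (h : commutator G ≤ center G) (x : G) : G →* G where
  toFun g := ⁅g, x⁆
  map_one' := commutatorElement_one_left x
  map_mul' a b := by
    rw [commutatorElement_mul_left_eq_conj_mul,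
      mem_center_iff.mp (commutatorElement_mem_center h b x) a, mul_inv_cancel_right]
    exact mem_center_iff.mp (commutatorElement_mem_center h a x) _

theorem coe_range_commutatorLeftHom (h : commutator G ≤ center G) (x : G) :
    ((commutatorLeftHom h x).range : Set G) = Set.range fun g : G => ⁅g, x⁆ :=
  MonoidHom.coe_range _

theorem card_range_commutatorLeftHom (h : commutator G ≤ center G) (x : G) :
    Nat.card (commutatorLeftHom h x).range = Nat.card (conjClass x) := by
  rw [card_conjClass_eq_card_range_commutatorElement, ← coe_range_commutatorLeftHom h x]
  rfl

theorem commutatorElement_pow_left (h : commutator G ≤ center G) (x g : G) (k : ℕ) :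
    ⁅x ^ k, g⁆ = ⁅x, g⁆ ^ k :=
  map_pow (commutatorLeftHom h g) x k

theorem commutatorElement_pow_right (h : commutator G ≤ center G) (g x : G) (k : ℕ) :
    ⁅g, x ^ k⁆ = ⁅g, x⁆ ^ k := by
  rw [← commutatorElement_inv, commutatorElement_pow_left h, ← inv_pow, commutatorElement_inv]

theorem coe_range_commutatorLeftHom_pow (h : commutator G ≤ center G) (x : G) (k : ℕ) :
    ((commutatorLeftHom h (x ^ k)).range : Set G) = (· ^ k) '' (commutatorLeftHom h x).range := by
  rw [coe_range_commutatorLeftHom, coe_range_commutatorLeftHom, ← Set.range_comp]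
  exact congrArg Set.range (funext fun g => commutatorElement_pow_right h g x k)

theorem pow_mem_center_of_card_conjClass [Finite G] {p m : ℕ} (hp : p.Prime)
    (h : commutator G ≤ center G) (hpm : p ∣ m)
    (hcard : ∀ x ∉ center G, Nat.card (conjClass x) = m) (x : G) : x ^ p ∈ center G := by
  by_contra hxp
  have hx : x ∉ center G := fun hx => hxp (pow_mem hx p)
  have hcardH : ∀ y ∉ center G, Nat.card (commutatorLeftHom h y).range = m := fun y hy =>
    (card_range_commutatorLeftHom h y).trans (hcard y hy)
  refine not_injOn_pow_of_prime_dvd_card hp _ (hcardH x hx ▸ hpm) ?_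
  rw [← Set.ncard_image_iff, ← coe_range_commutatorLeftHom_pow]
  exact (hcardH _ hxp).trans (hcardH x hx).symm

theorem pow_eq_one_of_mem_commutator {p : ℕ} (h : commutator G ≤ center G)
    (hpow : ∀ x : G, x ^ p ∈ center G) {g : G} (hg : g ∈ commutator G) : g ^ p = 1 := by
  rw [commutator_eq_closure] at hg
  induction hg using closure_induction with
  | mem y hy =>
    obtain ⟨u, v, rfl⟩ := hy
    rw [← commutatorElement_pow_left h, commutatorElement_eq_one_iff_mul_comm]
    exact (mem_center_iff.mp (hpow u) v).symm
  | one => exact one_pow p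
  | mul y w hy _ ihy ihw =>
    have hyw : Commute y w :=
      (mem_center_iff.mp (h (commutator_eq_closure G ▸ hy)) w).symm
    rw [hyw.mul_pow, ihy, ihw, one_mul]
  | inv y _ ihy => rw [inv_pow, ihy, inv_one]

end CentralCommutators

theorem quotient_and_commutator_elementary_abelian_general {p n : ℕ} [Fact p.Prime] (hn : 1 ≤ n)
    {G : Type*} [Group G] [Finite G]
    (ht : IsConjugateType G (p ^ n)) (hz : Subgroup.center G = commutator G) :
    ((∀ a b : G ⧸ Subgroup.center G, a * b = b * a) ∧
      (∀ a : G ⧸ Subgroup.center G, a ^ p = 1)) ∧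
    ((∀ a b : commutator G, a * b = b * a) ∧ (∀ a : commutator G, a ^ p = 1)) := by
  have hle : commutator G ≤ center G := hz.ge
  have hpow : ∀ x : G, x ^ p ∈ center G :=
    pow_mem_center_of_card_conjClass Fact.out hle (dvd_pow_self p (by omega))
      fun x hx => (ht.1 x).resolve_left (mt mem_center_of_card_conjClass_eq_one hx)
  have : IsMulCommutative (G ⧸ center G) :=
    Normal.quotient_commutative_iff_commutator_le.mpr hle
  refine ⟨⟨Std.Commutative.comm, ?_⟩, ?_, ?_⟩
  · rintro ⟨x⟩
    exact (QuotientGroup.eq_one_iff _).mpr (hpow x)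
  · exact fun a b => Subtype.ext (mem_center_iff.mp (hle a.2) b).symm
  · exact fun a => Subtype.ext (pow_eq_one_of_mem_commutator hle hpow a.2)

/-- If a finite p-group of conjugate type {1, pⁿ} has Z(G) = [G,G], then both G/Z(G)
and [G,G] are elementary abelian. -/
theorem quotient_and_commutator_elementary_abelian {p n : ℕ} [Fact p.Prime] (hn : 1 ≤ n)
    {G : Type*} [Group G] [Finite G] (hG : IsPGroup p G)
    (ht : IsConjugateType G (p ^ n)) (hz : Subgroup.center G = commutator G) :
    ((∀ a b : G ⧸ Subgroup.center G, a * b = b * a) ∧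
      (∀ a : G ⧸ Subgroup.center G, a ^ p = 1)) ∧
    ((∀ a b : commutator G, a * b = b * a) ∧ (∀ a : commutator G, a ^ p = 1)) :=
  quotient_and_commutator_elementary_abelian_general hn ht hz
end

section
/- Let G be a finite p-group of conjugate type {1, p³} and suppose there exists a normal subgroup H of G of order p with [G/H : Z(G/H)] = p³. Then a contradiction follows; i.e., no such normal subgroup H exists. -/
open scoped commutatorElement

/-!
If `xH` is central in `G/H`, the class of `x` lies in the coset `xH`, so it has at most
`p < p³` elements and `x` is central. Hence the preimage `K` of `Z(G/H)` is a central subgroup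
of index `p³`. An element `x` with a class of size `p³` is not central, so its centralizer
properly contains `K` (it contains `x ∉ K`), and its index `p³` is strictly smaller than
`[G : K] = p³`.
-/

open Subgroup

section ConjClass

variable {G : Type*} [Group G]

theorem conjClass_eq_orbit (x : G) : conjClass x = MulAction.orbit (ConjAct G) x := by
  ext y
  simp only [MulAction.mem_orbit_iff]
  constructor
  · rintro ⟨g, rfl⟩
    exact ⟨ConjAct.toConjAct g⁻¹, by simp [ConjAct.smul_def]⟩
  · rintro ⟨g, rfl⟩
    exact ⟨(ConjAct.ofConjAct g)⁻¹, by simp [ConjAct.smul_def]⟩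

theorem card_conjClass (x : G) : Nat.card (conjClass x) = (centralizer {x}).index := by
  rw [conjClass_eq_orbit,
    Nat.card_eq_of_bijective _ (MulAction.orbitEquivQuotientStabilizer (ConjAct G) x).bijective,
    centralizer_eq_comap_stabilizer]
  exact (index_comap_of_surjective (MulAction.stabilizer (ConjAct G) x)
    (f := ConjAct.toConjAct.toMonoidHom) ConjAct.toConjAct.surjective).symm

theorem card_conjClass_eq_one_iff (x : G) : Nat.card (conjClass x) = 1 ↔ x ∈ center G := by
  rw [card_conjClass, index_eq_one, centralizer_eq_top_iff_subset, Set.singleton_subset_iff, SetLike.mem_coe]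

theorem card_conjClass_lt_index {K : Subgroup G} [K.FiniteIndex] (hK : K ≤ center G) {x : G}
    (hx : x ∉ center G) : Nat.card (conjClass x) < K.index := by
  have hKx : K < centralizer {x} :=
    lt_of_le_of_ne' (hK.trans (center_le_centralizer _)) fun h =>
      hx (hK (h ▸ mem_centralizer_singleton_iff.mpr rfl))
  rw [card_conjClass]
  exact index_strictAnti hKx

theorem conjClass_subset_coset {N : Subgroup G} [N.Normal] {x : G}
    (hx : (x : G ⧸ N) ∈ center (G ⧸ N)) : conjClass x ⊆ (x * ·) '' (N : Set G) := by
  rintro _ ⟨g, rfl⟩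
  refine ⟨x⁻¹ * (g⁻¹ * x * g), ?_, mul_inv_cancel_left x _⟩
  rw [SetLike.mem_coe, ← QuotientGroup.eq_one_iff, QuotientGroup.mk_mul, QuotientGroup.mk_inv, inv_mul_eq_one,
    QuotientGroup.mk_mul, QuotientGroup.mk_mul, mul_assoc, ← (mem_center_iff.mp hx), ← mul_assoc,
    QuotientGroup.mk_inv, inv_mul_cancel, one_mul]

theorem card_conjClass_le_card_of_mk_mem_center {N : Subgroup G} [N.Normal] [Finite N] {x : G}
    (hx : (x : G ⧸ N) ∈ center (G ⧸ N)) : Nat.card (conjClass x) ≤ Nat.card N := by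
  calc Nat.card (conjClass x) ≤ Nat.card ((x * ·) '' (N : Set G)) :=
        Nat.card_mono ((Set.toFinite _).image _) (conjClass_subset_coset hx)
    _ = Nat.card N := Nat.card_image_of_injective (mul_right_injective x) _

end ConjClass

theorem IsConjugateType.comap_center_le_center {G : Type*} [Group G] {m : ℕ}
    (ht : IsConjugateType G m) {N : Subgroup G} [N.Normal] [Finite N] (hN : Nat.card N < m) :
    (center (G ⧸ N)).comap (QuotientGroup.mk' N) ≤ center G := fun x hx =>
  (card_conjClass_eq_one_iff x).mp <|
    (ht.1 x).resolve_right ((card_conjClass_le_card_of_mk_mem_center hx).trans_lt hN).ne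

theorem no_small_central_quotient_general {p : ℕ} [Fact p.Prime] {G : Type*} [Group G]
    (ht : IsConjugateType G (p ^ 3))
    (H : Subgroup G) [H.Normal] (hH : Nat.card H = p)
    (hidx : (Subgroup.center (G ⧸ H)).index = p ^ 3) : False := by
  have hp : p.Prime := Fact.out
  have : Finite H := Nat.finite_of_card_ne_zero (hH ▸ hp.ne_zero)
  set K := (center (G ⧸ H)).comap (QuotientGroup.mk' H)
  have hKidx : K.index = p ^ 3 := by
    rw [index_comap_of_surjective _ (QuotientGroup.mk'_surjective H), hidx]
  have : K.FiniteIndex := ⟨hKidx ▸ (pow_pos hp.pos 3).ne'⟩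
  have hKcenter : K ≤ center G :=
    ht.comap_center_le_center (hH.symm ▸ lt_self_pow₀ hp.one_lt (by norm_num))
  obtain ⟨x, hx⟩ := ht.2
  have hx_not_central : x ∉ center G := fun hxc =>
    (Nat.one_lt_pow (by norm_num) hp.one_lt).ne ((card_conjClass_eq_one_iff x).mpr hxc ▸ hx)
  exact (card_conjClass_lt_index hKcenter hx_not_central).ne (hx.trans hKidx.symm)

/-- In a finite p-group of conjugate type {1, p³} there is no normal subgroup H of
order p with [G/H : Z(G/H)] = p³. -/
theorem no_small_central_quotient {p : ℕ} [Fact p.Prime] {G : Type*} [Group G] [Finite G]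
    (hG : IsPGroup p G) (ht : IsConjugateType G (p ^ 3))
    (H : Subgroup G) [H.Normal] (hH : Nat.card H = p)
    (hidx : (Subgroup.center (G ⧸ H)).index = p ^ 3) : False :=
  no_small_central_quotient_general ht H hH hidx
end

section
/- Let H be a finite Camina p-group of nilpotency class 2 with |[H,H]| = p^m ≥ p³, and let A ≤ [H,H] be a subgroup of order p^{m-3}. Then H/A is a Camina group of conjugate type {1, p³}. -/
open scoped commutatorElement

/-!
Camina's condition passes to every quotient: a coset `x̄ c̄` with `c ∈ H'` lifts to `x c`, which is
conjugate to `x` in `H`. Since `A ≤ H'` we have `|(H/A)'| = |H'| / |A| = p³`, and `(H/A)'` is still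
central. In a Camina group with central, proper derived subgroup the class of an element of `G'` is
a singleton, while the class of any other `x` is the whole coset `xG'`, of size `|G'|`.
-/

open Subgroup

section

variable {G : Type*} [Group G]

lemma conjClass_subset_image_commutator (x : G) :
    conjClass x ⊆ (fun c => x * c) '' (commutator G : Set G) := by
  rintro y ⟨g, rfl⟩
  refine ⟨⁅x⁻¹, g⁻¹⁆, commutator_mem_commutator (mem_top _) (mem_top _), ?_⟩
  simp only [commutatorElement_def, inv_inv]
  group

lemma conjClass_eq_singleton_of_mem_center {x : G} (hx : x ∈ center G) : conjClass x = {x} := by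
  ext y
  constructor
  · rintro ⟨g, rfl⟩
    rw [mul_assoc, ← mem_center_iff.mp hx g, inv_mul_cancel_left]
    rfl
  · rintro rfl
    exact ⟨1, by group⟩

lemma card_conjClass_of_mem_center {x : G} (hx : x ∈ center G) : Nat.card (conjClass x) = 1 := by
  rw [conjClass_eq_singleton_of_mem_center hx, Nat.card_unique]

lemma IsCamina.card_conjClass (hG : IsCamina G) {x : G} (hx : x ∉ commutator G) :
    Nat.card (conjClass x) = Nat.card (commutator G) := by
  rw [hG x hx, Nat.card_image_of_injective (mul_right_injective x)]
  rfl

lemma IsCamina.isConjugateType (hG : IsCamina G) (hcent : commutator G ≤ center G)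
    (hne : commutator G ≠ ⊤) : IsConjugateType G (Nat.card (commutator G)) := by
  refine ⟨fun x => ?_, ?_⟩
  · by_cases hx : x ∈ commutator G
    · exact Or.inl (card_conjClass_of_mem_center (hcent hx))
    · exact Or.inr (hG.card_conjClass hx)
  · obtain ⟨x, hx⟩ := SetLike.exists_not_mem_of_ne_top _ hne rfl
    exact ⟨x, hG.card_conjClass hx⟩

lemma commutator_ne_top_of_le_center (hcent : commutator G ≤ center G) (hne : commutator G ≠ ⊥) :
    commutator G ≠ ⊤ := fun htop =>
  hne ((commutator_eq_bot_iff_center_eq_top G).mpr (top_le_iff.mp (htop ▸ hcent)))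

lemma commutator_le_center_of_lowerCentralSeries_two_eq_bot
    (h : (⊤ : Subgroup G).lowerCentralSeries 2 = ⊥) : commutator G ≤ center G := by
  rw [← centralizer_univ, ← coe_top, ← commutator_eq_bot_iff_le_centralizer]
  exact h

end

section

variable {G G' : Type*} [Group G] [Group G']

lemma map_commutator_of_surjective {f : G →* G'} (hf : Function.Surjective f) :
    (commutator G).map f = commutator G' := by
  rw [commutator_def, commutator_def, map_commutator, map_top_of_surjective f hf]

lemma map_center_le_center_of_surjective {f : G →* G'} (hf : Function.Surjective f) :
    (center G).map f ≤ center G' := by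
  rintro _ ⟨x, hx, rfl⟩
  refine mem_center_iff.mpr fun y => ?_
  obtain ⟨y, rfl⟩ := hf y
  rw [← map_mul, ← map_mul, mem_center_iff.mp hx y]

end

section

variable {G : Type*} [Group G] (N : Subgroup G) [N.Normal]

lemma commutator_quotient_le_center (hcent : commutator G ≤ center G) :
    commutator (G ⧸ N) ≤ center (G ⧸ N) := by
  rw [← map_commutator_of_surjective (QuotientGroup.mk'_surjective N)]
  exact (map_mono hcent).trans (map_center_le_center_of_surjective (QuotientGroup.mk'_surjective N))

lemma card_mul_card_commutator_quotient (hN : N ≤ commutator G) :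
    Nat.card N * Nat.card (commutator (G ⧸ N)) = Nat.card (commutator G) := by
  rw [← map_commutator_of_surjective (QuotientGroup.mk'_surjective N),
    ← relIndex_bot_left (map _ _), ← relIndex_comap, MonoidHom.comap_bot, QuotientGroup.ker_mk',
    ← relIndex_bot_left N, relIndex_mul_relIndex _ _ _ bot_le hN, relIndex_bot_left]

lemma IsCamina.quotient (hG : IsCamina G) : IsCamina (G ⧸ N) := by
  have hmap := map_commutator_of_surjective (QuotientGroup.mk'_surjective N)
  intro x hx
  obtain ⟨x, rfl⟩ := QuotientGroup.mk'_surjective N x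
  have hx' : x ∉ commutator G := fun h => hx (hmap ▸ mem_map_of_mem _ h)
  refine (conjClass_subset_image_commutator _).antisymm ?_
  rintro _ ⟨_, hc, rfl⟩
  rw [← hmap] at hc
  obtain ⟨c, hc, rfl⟩ := hc
  obtain ⟨g, hg⟩ : x * c ∈ conjClass x := hG x hx' ▸ ⟨c, hc, rfl⟩
  exact ⟨QuotientGroup.mk' N g, by rw [← map_inv, ← map_mul, ← map_mul, hg, map_mul]⟩

end

theorem camina_quotient_conjugate_type_general {p m : ℕ} [Fact p.Prime]
    {H : Type*} [Group H] (hC : IsCamina H)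
    (hcl : (⊤ : Subgroup H).lowerCentralSeries 2 = ⊥ ∧ (⊤ : Subgroup H).lowerCentralSeries 1 ≠ ⊥)
    (hm : 3 ≤ m) (hcard : Nat.card (commutator H) = p ^ m)
    (A : Subgroup H) [A.Normal] (hA : A ≤ commutator H)
    (hAcard : Nat.card A = p ^ (m - 3)) :
    IsCamina (H ⧸ A) ∧ IsConjugateType (H ⧸ A) (p ^ 3) := by
  have hp : p.Prime := Fact.out
  have hcardQ : Nat.card (commutator (H ⧸ A)) = p ^ 3 := by
    have h := card_mul_card_commutator_quotient A hA
    rw [hcard, hAcard, ← Nat.pow_sub_mul_pow p hm] at h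
    exact Nat.eq_of_mul_eq_mul_left (pow_pos hp.pos _) h
  have hcentQ := commutator_quotient_le_center A
    (commutator_le_center_of_lowerCentralSeries_two_eq_bot hcl.1)
  have hneQ : commutator (H ⧸ A) ≠ ⊥ := fun h => by
    rw [h, card_bot] at hcardQ
    exact (Nat.one_lt_pow (by norm_num) hp.one_lt).ne hcardQ
  have hCQ := hC.quotient A
  exact ⟨hCQ, hcardQ ▸ hCQ.isConjugateType hcentQ (commutator_ne_top_of_le_center hcentQ hneQ)⟩

/-- Quotient of a class-2 Camina p-group with |H'| = p^m ≥ p³ by a subgroup of H' of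
order p^{m-3} is a Camina group of conjugate type {1, p³}. -/
theorem camina_quotient_conjugate_type {p m : ℕ} [Fact p.Prime]
    {H : Type*} [Group H] [Finite H] (hG : IsPGroup p H) (hC : IsCamina H)
    (hcl : (⊤ : Subgroup H).lowerCentralSeries 2 = ⊥ ∧ (⊤ : Subgroup H).lowerCentralSeries 1 ≠ ⊥)
    (hm : 3 ≤ m) (hcard : Nat.card (commutator H) = p ^ m)
    (A : Subgroup H) [A.Normal] (hA : A ≤ commutator H)
    (hAcard : Nat.card A = p ^ (m - 3)) :
    IsCamina (H ⧸ A) ∧ IsConjugateType (H ⧸ A) (p ^ 3) :=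
  camina_quotient_conjugate_type_general hC hcl hm hcard A hA hAcard
end

section
/- Let p be an odd prime and G a finite special p-group (Z(G) = [G,G] = Φ(G), both elementary abelian) of conjugate type {1, pⁿ}. Then there exists a group H of exponent p that is isoclinic to G. -/
open scoped commutatorElement

/-- A special `p`-group: center = derived = Frattini subgroup, with central quotient
and center elementary abelian. -/
def IsSpecialPGroup (p : ℕ) (G : Type*) [Group G] : Prop :=
  IsPGroup p G ∧ Subgroup.center G = commutator G ∧ frattini G = commutator G ∧
  (∀ a : G ⧸ Subgroup.center G, a ^ p = 1) ∧ (∀ a ∈ Subgroup.center G, a ^ p = 1)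

/-!
In a group `G` of class two, commutation induces a bimultiplicative, alternating and
nondegenerate pairing `β : G/Z(G) × G/Z(G) → Z(G)`. If `Z(G)` has odd exponent `2k + 1`, then
`β^(k+1)` is a square root "`β/2`" of `β`, and `G/Z(G) × Z(G)` with the product
`(a, v) (b, w) = (a b, v w (β/2)(a, b))` is a group with `⁅(a, v), (b, w)⁆ = (1, β(a, b))`.
Its centre is `1 × Z(G)` by nondegeneracy, and its derived subgroup is `1 × Z(G)` when
`Z(G) = G'`, so it is isoclinic to `G`. Since `β/2` is alternating, `(a, w)^n = (a^n, w^n)`,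
whence exponent `p` as soon as `G/Z(G)` and `Z(G)` have exponent `p`.
-/

open scoped IsMulCommutative

theorem MonoidHom.apply_swap_eq_inv {V W : Type*} [Group V] [CommGroup W] (β : V →* V →* W)
    (hβ : ∀ a, β a a = 1) (a b : V) : β b a = (β a b)⁻¹ := by
  have h := hβ (a * b)
  simp only [map_mul, MonoidHom.mul_apply, hβ, one_mul, mul_one] at h
  exact eq_inv_of_mul_eq_one_left h

@[ext]
structure BilinearExtension {V W : Type*} [Group V] [CommGroup W] (β : V →* V →* W) where
  fst : V
  snd : W

namespace BilinearExtension

variable {V W : Type*} [Group V] [CommGroup W] {β : V →* V →* W}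

instance : Mul (BilinearExtension β) := ⟨fun A B => ⟨A.fst * B.fst, A.snd * B.snd * β A.fst B.fst⟩⟩
instance : One (BilinearExtension β) := ⟨⟨1, 1⟩⟩
instance : Inv (BilinearExtension β) := ⟨fun A => ⟨A.fst⁻¹, A.snd⁻¹ * β A.fst A.fst⟩⟩

instance [Finite V] [Finite W] : Finite (BilinearExtension β) :=
  Finite.of_injective (fun A => (A.fst, A.snd)) fun _ _ h => BilinearExtension.ext
    (congrArg Prod.fst h) (congrArg Prod.snd h)

@[simp] theorem fst_mul (A B : BilinearExtension β) : (A * B).fst = A.fst * B.fst := rfl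
@[simp] theorem snd_mul (A B : BilinearExtension β) :
    (A * B).snd = A.snd * B.snd * β A.fst B.fst := rfl
@[simp] theorem fst_one : (1 : BilinearExtension β).fst = 1 := rfl
@[simp] theorem snd_one : (1 : BilinearExtension β).snd = 1 := rfl
@[simp] theorem fst_inv (A : BilinearExtension β) : A⁻¹.fst = A.fst⁻¹ := rfl
@[simp] theorem snd_inv (A : BilinearExtension β) : A⁻¹.snd = A.snd⁻¹ * β A.fst A.fst := rfl

instance : Group (BilinearExtension β) where
  mul_assoc A B C := by
    ext
    · exact mul_assoc A.fst B.fst C.fst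
    · simp only [snd_mul, fst_mul, map_mul, MonoidHom.mul_apply]
      simp only [mul_comm, mul_assoc, mul_left_comm]
  one_mul A := by ext <;> simp
  mul_one A := by ext <;> simp
  inv_mul_cancel A := by
    ext
    · exact inv_mul_cancel A.fst
    · simp only [snd_mul, snd_inv, fst_inv, map_inv, MonoidHom.inv_apply, snd_one]
      rw [mul_right_comm A.snd⁻¹, inv_mul_cancel, one_mul, mul_inv_cancel]

variable (β) in
def fstHom : BilinearExtension β →* V where
  toFun A := A.fst
  map_one' := rfl
  map_mul' _ _ := rfl

variable (β) in
def inr : W →* BilinearExtension β where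
  toFun w := ⟨1, w⟩
  map_one' := rfl
  map_mul' v w := by ext <;> simp

@[simp] theorem fstHom_apply (A : BilinearExtension β) : fstHom β A = A.fst := rfl
@[simp] theorem fst_inr (w : W) : (inr β w).fst = 1 := rfl
@[simp] theorem snd_inr (w : W) : (inr β w).snd = w := rfl

theorem fstHom_surjective : Function.Surjective (fstHom β) := fun a => ⟨⟨a, 1⟩, rfl⟩

theorem inr_injective : Function.Injective (inr β) := fun _ _ h => congrArg snd h

theorem mem_center_iff {A : BilinearExtension β} :
    A ∈ Subgroup.center (BilinearExtension β) ↔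
      A.fst ∈ Subgroup.center V ∧ ∀ b, β b A.fst = β A.fst b := by
  simp only [Subgroup.mem_center_iff]
  constructor
  · intro hA
    refine ⟨fun b => congrArg fst (hA ⟨b, 1⟩), fun b => ?_⟩
    simpa [mul_comm A.snd] using congrArg snd (hA ⟨b, 1⟩)
  · rintro ⟨h₁, h₂⟩ B
    ext
    · exact h₁ B.fst
    · simp [h₂, mul_comm A.snd]

section Alternating

variable (hβ : ∀ a, β a a = 1)
include hβ

theorem snd_pow (A : BilinearExtension β) (n : ℕ) : (A ^ n).snd = A.snd ^ n := by
  induction n with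
  | zero => rw [pow_zero, pow_zero]; rfl
  | succ n ih =>
    have h₁ : (A ^ n).fst = A.fst ^ n := map_pow (fstHom β) A n
    rw [pow_succ, snd_mul, ih, h₁, map_pow, MonoidHom.pow_apply, hβ, one_pow, mul_one, pow_succ]

theorem pow_eq_one {n : ℕ} (hV : ∀ a : V, a ^ n = 1) (hW : ∀ w : W, w ^ n = 1)
    (A : BilinearExtension β) : A ^ n = 1 :=
  BilinearExtension.ext (by rw [← fstHom_apply, map_pow, fstHom_apply, hV, fst_one])
    (by rw [snd_pow hβ, hW, snd_one])

theorem commutatorElement_eq [IsMulCommutative V] (A B : BilinearExtension β) :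
    ⁅A, B⁆ = inr β (β A.fst B.fst ^ 2) := by
  ext
  · simp only [commutatorElement_def, fst_mul, fst_inv, fst_inr, mul_comm' A.fst B.fst,
      mul_inv_cancel_right, mul_inv_cancel]
  · simp only [commutatorElement_def, snd_mul, snd_inv, fst_mul, fst_inv, map_mul, map_inv,
      MonoidHom.mul_apply, MonoidHom.inv_apply, hβ, snd_inr,
      MonoidHom.apply_swap_eq_inv β hβ A.fst B.fst, mul_one, one_mul, inv_inv, mul_inv_cancel]
    rw [inv_one, mul_one, mul_right_comm _ (β A.fst B.fst) A.snd⁻¹, mul_right_comm A.snd,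
      mul_inv_cancel, one_mul, mul_assoc B.snd, mul_inv_cancel_comm, pow_two]

theorem commutator_eq_map_closure [IsMulCommutative V] :
    commutator (BilinearExtension β) =
      (Subgroup.closure {w | ∃ a b, β a b ^ 2 = w}).map (inr β) := by
  rw [commutator_eq_closure, MonoidHom.map_closure]
  congr 1
  ext A
  constructor
  · rintro ⟨B, C, rfl⟩
    exact ⟨_, ⟨B.fst, C.fst, rfl⟩, (commutatorElement_eq hβ B C).symm⟩
  · rintro ⟨_, ⟨a, b, rfl⟩, rfl⟩
    exact ⟨⟨a, 1⟩, ⟨b, 1⟩, commutatorElement_eq hβ _ _⟩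

end Alternating

theorem center_eq_ker_fstHom [IsMulCommutative V] (hβ : ∀ a, (∀ b, β b a = β a b) → a = 1) :
    Subgroup.center (BilinearExtension β) = (fstHom β).ker := by
  ext A
  rw [mem_center_iff, MonoidHom.mem_ker, fstHom_apply]
  refine ⟨fun h => hβ A.fst h.2, fun h => ⟨?_, fun b => by simp [h]⟩⟩
  rw [h]
  exact Subgroup.one_mem _

end BilinearExtension

section CommutatorPairing

variable {G : Type*} [Group G] (h : commutator G ≤ Subgroup.center G)
include h

theorem commutatorElement_mem_center_s18 (x y : G) : ⁅x, y⁆ ∈ Subgroup.center G :=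
  h (Subgroup.commutator_mem_commutator (Subgroup.mem_top x) (Subgroup.mem_top y))

theorem commutatorElement_mul_left_of_le_center (x y z : G) :
    ⁅x * y, z⁆ = ⁅x, z⁆ * ⁅y, z⁆ := by
  have hc := Subgroup.mem_center_iff.mp (commutatorElement_mem_center_s18 h y z)
  rw [commutatorElement_mul_left_eq_conj_mul, hc x, mul_inv_cancel_right, hc]

theorem commutatorElement_mul_right_of_le_center (x y z : G) :
    ⁅x, y * z⁆ = ⁅x, y⁆ * ⁅x, z⁆ := by
  rw [commutatorElement_mul_right_eq_mul_conj, mul_assoc _ y,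
    Subgroup.mem_center_iff.mp (commutatorElement_mem_center_s18 h x z) y, ← mul_assoc,
    mul_inv_cancel_right]

def commutatorRight (x : G) : G →* Subgroup.center G where
  toFun y := ⟨⁅x, y⁆, commutatorElement_mem_center_s18 h x y⟩
  map_one' := Subtype.ext (commutatorElement_one_right x)
  map_mul' y z := Subtype.ext (commutatorElement_mul_right_of_le_center h x y z)

def commutatorPairing : G ⧸ Subgroup.center G →* G ⧸ Subgroup.center G →* Subgroup.center G :=
  QuotientGroup.lift _
    { toFun x := QuotientGroup.lift _ (commutatorRight h x) fun _ hy =>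
        Subtype.ext (commutatorElement_eq_one_iff_commute.mpr
          (Subgroup.mem_center_iff.mp hy x))
      map_one' := QuotientGroup.monoidHom_ext _ <| MonoidHom.ext fun y =>
        Subtype.ext (commutatorElement_one_left y)
      map_mul' x x' := QuotientGroup.monoidHom_ext _ <| MonoidHom.ext fun y =>
        Subtype.ext (commutatorElement_mul_left_of_le_center h x x' y) }
    fun _ hx => QuotientGroup.monoidHom_ext _ <| MonoidHom.ext fun y =>
      Subtype.ext (commutatorElement_eq_one_iff_commute.mpr
        (Subgroup.mem_center_iff.mp hx y).symm)

theorem commutatorPairing_self (a : G ⧸ Subgroup.center G) : commutatorPairing h a a = 1 := by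
  induction a using QuotientGroup.induction_on with
  | H x => exact Subtype.ext (commutatorElement_self x)

theorem commutatorPairing_pow_apply_self (n : ℕ) (a : G ⧸ Subgroup.center G) :
    (commutatorPairing h ^ n) a a = 1 := by
  rw [MonoidHom.pow_apply, MonoidHom.pow_apply, commutatorPairing_self, one_pow]

theorem eq_one_of_commutatorPairing_eq_one {a : G ⧸ Subgroup.center G}
    (ha : ∀ b, commutatorPairing h a b = 1) : a = 1 := by
  induction a using QuotientGroup.induction_on with
  | H x =>
    refine (QuotientGroup.eq_one_iff x).mpr (Subgroup.mem_center_iff.mpr fun y => ?_)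
    exact (commutatorElement_eq_one_iff_mul_comm.mp (congrArg Subtype.val (ha y))).symm

theorem closure_commutatorPairing_eq_top (h' : Subgroup.center G ≤ commutator G) :
    Subgroup.closure {w | ∃ a b, commutatorPairing h a b = w} = ⊤ := by
  refine eq_top_iff.mpr fun w _ => ?_
  have hw : (w : G) ∈ (Subgroup.closure {w | ∃ a b, commutatorPairing h a b = w}).map
      (Subgroup.center G).subtype := by
    rw [MonoidHom.map_closure]
    refine Subgroup.closure_mono ?_ (commutator_eq_closure G ▸ h' w.2)
    rintro _ ⟨x, y, rfl⟩
    exact ⟨_, ⟨x, y, rfl⟩, rfl⟩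
  obtain ⟨u, hu, huw⟩ := hw
  rwa [← Subtype.ext huw]

end CommutatorPairing

theorem Isoclinic.trans_mulEquiv {G K H : Type*} [Group G] [Group K] [Group H]
    (hGK : Isoclinic G K) (e : K ≃* H) : Isoclinic G H := by
  obtain ⟨φ, θ, hφθ⟩ := hGK
  have hZ : (Subgroup.center K).map e.toMonoidHom = Subgroup.center H := by
    ext z
    rw [Subgroup.mem_map_equiv]
    exact MulEquivClass.apply_mem_center_iff e.symm
  have hC : (commutator K).map e.toMonoidHom = commutator H := by
    rw [commutator_def, commutator_def, Subgroup.map_commutator,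
      Subgroup.map_top_of_surjective _ e.surjective]
  let ψ := QuotientGroup.congr _ _ e hZ
  have hψ : ∀ {x : G} {x' : H}, ψ (φ x) = x' → φ x = e.symm x' := fun {x x'} hx => by
    rw [← ψ.symm_apply_apply (φ x), hx]
    rfl
  refine ⟨φ.trans ψ, θ.trans (((commutator K).equivMapOfInjective _ e.injective).trans
    (MulEquiv.subgroupCongr hC)), fun x y x' y' hx hy => ?_⟩
  show e (θ _ : K) = _
  rw [hφθ x y _ _ (hψ hx) (hψ hy), map_commutatorElement, e.apply_symm_apply, e.apply_symm_apply]

section HalfCommutatorPairing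
open BilinearExtension

variable {G : Type*} [Group G] {k : ℕ} (h : commutator G ≤ Subgroup.center G)
  (hW : ∀ w : Subgroup.center G, w ^ (2 * k + 1) = 1)
include hW

theorem sq_commutatorPairing_pow_succ (a b : G ⧸ Subgroup.center G) :
    ((commutatorPairing h ^ (k + 1)) a b) ^ 2 = commutatorPairing h a b := by
  rw [MonoidHom.pow_apply, MonoidHom.pow_apply, ← pow_mul,
    show (k + 1) * 2 = 2 * k + 1 + 1 by ring, pow_succ, hW, one_mul]

theorem eq_one_of_commutatorPairing_pow_succ_symm {a : G ⧸ Subgroup.center G}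
    (ha : ∀ b, (commutatorPairing h ^ (k + 1)) b a = (commutatorPairing h ^ (k + 1)) a b) :
    a = 1 := by
  refine eq_one_of_commutatorPairing_eq_one h fun b => ?_
  rw [← sq_commutatorPairing_pow_succ h hW, pow_two, mul_eq_one_iff_eq_inv,
    ← MonoidHom.apply_swap_eq_inv _ (commutatorPairing_pow_apply_self h _) a b]
  exact (ha b).symm

theorem isoclinic_bilinearExtension (hZC : Subgroup.center G = commutator G) :
    Isoclinic G (BilinearExtension (commutatorPairing hZC.ge ^ (k + 1))) := by
  set β := commutatorPairing hZC.ge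
  have : IsMulCommutative (G ⧸ Subgroup.center G) :=
    Subgroup.Normal.quotient_commutative_iff_commutator_le.mpr hZC.ge
  have hcenter := center_eq_ker_fstHom fun _ => eq_one_of_commutatorPairing_pow_succ_symm hZC.ge hW
  have hcomm : commutator (BilinearExtension (β ^ (k + 1))) = (inr _).range := by
    rw [commutator_eq_map_closure (commutatorPairing_pow_apply_self hZC.ge _)]
    simp only [sq_commutatorPairing_pow_succ hZC.ge hW]
    rw [closure_commutatorPairing_eq_top hZC.ge hZC.le, MonoidHom.range_eq_map]
  let φ := ((QuotientGroup.quotientMulEquivOfEq hcenter).trans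
    (QuotientGroup.quotientKerEquivOfSurjective _ fstHom_surjective)).symm
  let θ := (MulEquiv.subgroupCongr hZC.symm).trans
    ((MonoidHom.ofInjective inr_injective).trans (MulEquiv.subgroupCongr hcomm.symm))
  refine ⟨φ, θ, fun x y x' y' hx hy => ?_⟩
  have hx' : (x : G ⧸ Subgroup.center G) = x'.fst := (φ.symm_apply_eq.mpr hx.symm).symm
  have hy' : (y : G ⧸ Subgroup.center G) = y'.fst := (φ.symm_apply_eq.mpr hy.symm).symm
  show inr _ _ = _
  rw [commutatorElement_eq (commutatorPairing_pow_apply_self hZC.ge _),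
    sq_commutatorPairing_pow_succ hZC.ge hW, ← hx', ← hy']
  rfl

end HalfCommutatorPairing

theorem isoclinic_to_exponent_p_general {p : ℕ} (hp : Odd p)
    {G : Type*} [Group G] [Finite G] (hG : IsSpecialPGroup p G) :
    ∃ H : GrpCat, (∀ x : H, x ^ p = 1) ∧ Isoclinic G H := by
  obtain ⟨k, rfl⟩ := hp
  obtain ⟨-, hZC, -, hV, hW⟩ := hG
  have hW' : ∀ w : Subgroup.center G, w ^ (2 * k + 1) = 1 := fun w => Subtype.ext (hW w w.2)
  let K := BilinearExtension (commutatorPairing hZC.ge ^ (k + 1))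
  refine ⟨GrpCat.of (Shrink K), fun x => Shrink.mulEquiv.injective ?_,
    (isoclinic_bilinearExtension hW' hZC).trans_mulEquiv Shrink.mulEquiv.symm⟩
  rw [map_pow, map_one]
  exact BilinearExtension.pow_eq_one (commutatorPairing_pow_apply_self hZC.ge _) hV hW' _

/-- Every special p-group (p odd) of conjugate type {1, pⁿ} is isoclinic to a group of
exponent p. -/
theorem isoclinic_to_exponent_p {p n : ℕ} [Fact p.Prime] (hp : Odd p) (hn : 1 ≤ n)
    {G : Type*} [Group G] [Finite G] (hG : IsSpecialPGroup p G)
    (ht : IsConjugateType G (p ^ n)) :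
    ∃ H : GrpCat, (∀ x : H, x ^ p = 1) ∧ Isoclinic G H :=
  isoclinic_to_exponent_p_general hp hG
end
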